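/- arXiv:2410.00418 — 2 statements merged into one kernel-verified Lean document; each statement's English description precedes it below -/
import Mathlib

section
/- Let X ~ N(0,1), N ~ N(0,σ_N²) independent with σ_N > 0, Y = X + N, and X̂* = Y/(1+σ_N²). If ẑ(t) solves dẑ/dt = (tσ_N²/(1+t²σ_N²))·ẑ with initial condition ẑ(0) = X̂*, then ẑ(1) = Y/√(1+σ_N²). -/
open MeasureTheory ProbabilityTheory Real

/-- Scalar Gaussian denoising: the rectified flow started from the posterior mean
`X̂* = Y/(1+σ²)` terminates at `ẑ(1) = Y/√(1+σ²)`. -/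
theorem rectified_flow_from_posterior_mean
    {Ω : Type*} [MeasurableSpace Ω] (μ : Measure Ω) [IsProbabilityMeasure μ]
    (X N : Ω → ℝ) (hX : Measurable X) (hN : Measurable N)
    (hindep : IndepFun X N μ) (σ : ℝ) (hσ : 0 < σ)
    (hXd : Measure.map X μ = gaussianReal 0 1)
    (hNd : Measure.map N μ = gaussianReal 0 (σ ^ 2).toNNReal)
    (z : Ω → ℝ → ℝ)
    (hinit : ∀ ω, z ω 0 = (X ω + N ω) / (1 + σ ^ 2))
    (hode : ∀ ω, ∀ t ∈ Set.Icc (0 : ℝ) 1,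
      HasDerivAt (z ω) (t * σ ^ 2 / (1 + t ^ 2 * σ ^ 2) * z ω t) t) :
    ∀ ω, z ω 1 = (X ω + N ω) / Real.sqrt (1 + σ ^ 2) := by
  intro ω
  have hσ2 : (0:ℝ) < σ ^ 2 := by positivity
  set h : ℝ → ℝ := fun t => z ω t / Real.sqrt (1 + t ^ 2 * σ ^ 2) with hh
  have hpos : ∀ t : ℝ, (0:ℝ) < 1 + t ^ 2 * σ ^ 2 := by intro t; positivity
  have hsq : ∀ t : ℝ, Real.sqrt (1 + t ^ 2 * σ ^ 2) ≠ 0 := by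
    intro t; exact ne_of_gt (Real.sqrt_pos.2 (hpos t))
  have hderivh : ∀ t ∈ Set.Icc (0:ℝ) 1, HasDerivAt h 0 t := by
    intro t ht
    have hz := hode ω t ht
    have hs : HasDerivAt (fun t : ℝ => Real.sqrt (1 + t ^ 2 * σ ^ 2))
        (t * σ ^ 2 / Real.sqrt (1 + t ^ 2 * σ ^ 2)) t := by
      have hinner : HasDerivAt (fun t : ℝ => 1 + t ^ 2 * σ ^ 2) (2 * t * σ ^ 2) t := by
        have : HasDerivAt (fun t : ℝ => 1 + t ^ 2 * σ ^ 2) (0 + 2 * t ^ 1 * σ ^ 2) t := by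
          exact (hasDerivAt_const t 1).add (((hasDerivAt_pow 2 t)).mul_const (σ ^ 2))
        simpa using this
      have := hinner.sqrt (ne_of_gt (hpos t))
      convert this using 1
      field_simp
    have hd := hz.div hs (hsq t)
    have heq : (t * σ ^ 2 / (1 + t ^ 2 * σ ^ 2) * z ω t * Real.sqrt (1 + t ^ 2 * σ ^ 2)
        - z ω t * (t * σ ^ 2 / Real.sqrt (1 + t ^ 2 * σ ^ 2)))
        / Real.sqrt (1 + t ^ 2 * σ ^ 2) ^ 2 = 0 := by
      have hsqr : Real.sqrt (1 + t ^ 2 * σ ^ 2) ^ 2 = 1 + t ^ 2 * σ ^ 2 :=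
        Real.sq_sqrt (le_of_lt (hpos t))
      rw [div_eq_zero_iff]
      left
      field_simp
      linear_combination (t * σ ^ 2 * z ω t) * Real.mul_self_sqrt (le_of_lt (hpos t))
    rw [heq] at hd
    exact hd
  have hcont : ContinuousOn h (Set.Icc 0 1) := fun t ht =>
    (hderivh t ht).continuousAt.continuousWithinAt
  have hconst : h 1 = h 0 :=
    constant_of_has_deriv_right_zero hcont
      (fun t ht => ((hderivh t (Set.mem_Icc_of_Ico ht)).hasDerivWithinAt)) 1
      (Set.mem_Icc.2 ⟨zero_le_one, le_refl 1⟩)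
  have h0 : h 0 = (X ω + N ω) / (1 + σ ^ 2) := by
    simp [hh, hinit ω]
  have h1 : h 1 = z ω 1 / Real.sqrt (1 + σ ^ 2) := by
    simp [hh]
  have hs1 : Real.sqrt (1 + σ ^ 2) ≠ 0 := by
    have : (0:ℝ) < 1 + σ ^ 2 := by positivity
    exact ne_of_gt (Real.sqrt_pos.2 this)
  have hsq1 : Real.sqrt (1 + σ ^ 2) ^ 2 = 1 + σ ^ 2 :=
    Real.sq_sqrt (by positivity)
  rw [h1, h0] at hconst
  field_simp at hconst ⊢
  have hne : (1 + σ ^ 2) ≠ 0 := by positivity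
  have key : z ω 1 * Real.sqrt (1 + σ ^ 2) * (1 + σ ^ 2) = (X ω + N ω) * (1 + σ ^ 2) := by
    linear_combination Real.sqrt (1 + σ ^ 2) * hconst + (X ω + N ω) * hsq1
  exact mul_right_cancel₀ hne key
end

section
/- Let X ~ N(0,1), N ~ N(0,σ_N²) independent with σ_N > 0, and Y = X + N. The estimator X̂₀ = Y/√(1+σ_N²) satisfies: (i) X̂₀ ~ N(0,1), i.e. it has the same distribution as X (perfect perceptual index); and (ii) E[(X − X̂₀)²] = 2(1 − 1/√(1+σ_N²)), which is strictly smaller than twice the MMSE 2σ_N²/(1+σ_N²). -/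
/-!
The estimator and its error are both of the form `a X + b N` with `X`, `N` independent centred
Gaussians, hence centred Gaussians of variance `a² + b² σ²`. With `s = √(1 + σ²)`, the choice
`a = b = 1/s` gives variance `1`, and `a = 1 - 1/s`, `b = -1/s` gives second moment `2 (1 - 1/s)`.
Since twice the MMSE equals `2 (1 - 1/s²)`, the strict inequality is `s > 1`.
-/

open MeasureTheory ProbabilityTheory Real
open scoped NNReal

namespace ProbabilityTheory

variable {Ω : Type*} {mΩ : MeasurableSpace Ω} {P : Measure Ω} {X Y : Ω → ℝ}
  {m₁ m₂ : ℝ} {v₁ v₂ : ℝ≥0}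

lemma integral_sq_gaussianReal (m : ℝ) (v : ℝ≥0) :
    ∫ x, x ^ 2 ∂gaussianReal m v = m ^ 2 + v := by
  have h := variance_eq_sub (memLp_id_gaussianReal (μ := m) (v := v) 2)
  simp only [variance_id_gaussianReal, Pi.pow_apply, id, integral_id_gaussianReal] at h
  linarith

lemma HasLaw.integral_sq_of_gaussianReal {m : ℝ} {v : ℝ≥0}
    (hX : HasLaw X (gaussianReal m v) P) : ∫ ω, X ω ^ 2 ∂P = m ^ 2 + v := by
  rw [← integral_sq_gaussianReal, ← hX.integral_comp (by fun_prop)]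
  rfl

lemma IndepFun.hasLaw_const_mul_add_const_mul_gaussianReal (hXY : IndepFun X Y P)
    (hX : HasLaw X (gaussianReal m₁ v₁) P) (hY : HasLaw Y (gaussianReal m₂ v₂) P) (a b : ℝ) :
    HasLaw (fun ω ↦ a * X ω + b * Y ω)
      (gaussianReal (a * m₁ + b * m₂)
        (.mk (a ^ 2) (sq_nonneg _) * v₁ + .mk (b ^ 2) (sq_nonneg _) * v₂)) P := by
  rw [← gaussianReal_conv_gaussianReal]
  exact IndepFun.hasLaw_fun_add (gaussianReal_const_mul hX a) (gaussianReal_const_mul hY b)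
    (hXY.comp (measurable_const_mul a) (measurable_const_mul b))

end ProbabilityTheory

/-- Scalar Gaussian denoising: the estimator `X̂₀ = Y/√(1+σ²)` has the same
distribution as `X` (standard Gaussian), and its MSE equals
`2(1 − 1/√(1+σ²))`, which is strictly smaller than twice the MMSE `2σ²/(1+σ²)`. -/
theorem optimal_perfect_perception_estimator
    {Ω : Type*} [MeasurableSpace Ω] (μ : Measure Ω) [IsProbabilityMeasure μ]
    (X N : Ω → ℝ) (hX : Measurable X) (hN : Measurable N)
    (hindep : IndepFun X N μ) (σ : ℝ) (hσ : 0 < σ)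
    (hXd : Measure.map X μ = gaussianReal 0 1)
    (hNd : Measure.map N μ = gaussianReal 0 (σ ^ 2).toNNReal) :
    Measure.map (fun ω => (X ω + N ω) / Real.sqrt (1 + σ ^ 2)) μ = gaussianReal 0 1
    ∧ ∫ ω, (X ω - (X ω + N ω) / Real.sqrt (1 + σ ^ 2)) ^ 2 ∂μ
        = 2 * (1 - 1 / Real.sqrt (1 + σ ^ 2))
    ∧ 2 * (1 - 1 / Real.sqrt (1 + σ ^ 2)) < 2 * (σ ^ 2 / (1 + σ ^ 2)) := by
  have hXlaw : HasLaw X (gaussianReal 0 1) μ := ⟨hX.aemeasurable, hXd⟩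
  have hNlaw : HasLaw N (gaussianReal 0 (σ ^ 2).toNNReal) μ := ⟨hN.aemeasurable, hNd⟩
  set s := √(1 + σ ^ 2)
  have hs_sq : s ^ 2 = 1 + σ ^ 2 := sq_sqrt (by positivity)
  have hs_pos : 0 < s := by positivity
  have hs_one : 1 < s := by nlinarith
  have hvar (a b : ℝ) : ((.mk (a ^ 2) (sq_nonneg _) * 1 + .mk (b ^ 2) (sq_nonneg _) *
      (σ ^ 2).toNNReal : ℝ≥0) : ℝ) = a ^ 2 + b ^ 2 * σ ^ 2 := by
    push_cast [Real.coe_toNNReal _ (sq_nonneg σ)]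
    ring
  refine ⟨?_, ?_, ?_⟩
  · convert (hindep.hasLaw_const_mul_add_const_mul_gaussianReal hXlaw hNlaw (1 / s) (1 / s)).map_eq
      using 2
    · ext ω; ring
    · ring
    · ext; rw [hvar, NNReal.coe_one]; field_simp; linarith
  · have h := hindep.hasLaw_const_mul_add_const_mul_gaussianReal hXlaw hNlaw (1 - 1 / s) (-(1 / s))
    calc ∫ ω, (X ω - (X ω + N ω) / s) ^ 2 ∂μ
        = ∫ ω, ((1 - 1 / s) * X ω + -(1 / s) * N ω) ^ 2 ∂μ := by congr 1; ext ω; ring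
      _ = 2 * (1 - 1 / s) := by
        rw [h.integral_sq_of_gaussianReal, hvar]
        field_simp
        linarith
  · have hmmse : σ ^ 2 / (1 + σ ^ 2) = 1 - 1 / s ^ 2 := by rw [hs_sq]; field_simp; ring
    have hs_inv : 1 / s ^ 2 < 1 / s := by gcongr; nlinarith
    rw [hmmse]
    linarith
end
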